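/- arXiv:2505.22807 — 6 statements merged into one kernel-verified Lean document; each statement's English description precedes it below -/
import Mathlib

section
/- Assume d = 1, Θ = ℝ, and that for every z ∈ 𝒵 the convex loss ℓ_z : ℝ → ℝ is L-Lipschitz. Let Z_1,…,Z_n be i.i.d. P, let P_n denote their empirical distribution, and let θ̂ ∈ argmin_θ L_{P_n}(θ) be any empirical minimizer. Then for every t ≥ 0, P(ℰ_{L_P}(θ̂) > t) ≤ 2 exp(−n t² / (2L²)). -/
open MeasureTheory Set
open scoped NNReal

noncomputable section

/-- The right derivative of a convex `f : ℝ → ℝ`, `D₊f(θ) = inf_{t>0} (f(θ+t) - f(θ))/t`. -/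
def Dplus (f : ℝ → ℝ) (θ : ℝ) : ℝ :=
  sInf ((fun t => (f (θ + t) - f θ) / t) '' Set.Ioi 0)

/-- The left derivative of a convex `f : ℝ → ℝ`, `D₋f(θ) = sup_{t>0} (f(θ) - f(θ-t))/t`. -/
def Dminus (f : ℝ → ℝ) (θ : ℝ) : ℝ :=
  sSup ((fun t => (f θ - f (θ - t)) / t) '' Set.Ioi 0)

/-- The stationarity error
`ℰ_f(θ) = [max{-D₊f(θ), D₋f(θ)}]₊ - inf_θ inf_{g ∈ ∂f(θ)} |g|`. -/
def statErr (f : ℝ → ℝ) (θ : ℝ) : ℝ :=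
  max (max (-(Dplus f θ)) (Dminus f θ)) 0 -
    sInf {a : ℝ | ∃ θ₀ g : ℝ, a = |g| ∧ ∀ θ' : ℝ, f θ₀ + g * (θ' - θ₀) ≤ f θ'}

/-!
The subtracted infimum in `ℰ` is nonnegative, so `ℰ_{L_P}(θ̂) > t` forces `D₊L_P(θ̂) < -t` or
`D₋L_P(θ̂) > t`, and the reflection `θ ↦ -θ` turns the second event into the first. If
`D₊L_P(θ̂) < -t`, there are `q ≥ θ̂` and `h > 0` with `(L_P(q + h) - L_P(q)) / h < -t`. The empirical
risk is convex and minimized at `θ̂ ≤ q`, so its slope over `[q, q + h]` is nonnegative; that slope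
is the average of `n` i.i.d. variables with values in `[-L, L]` and mean `< -t`, and Hoeffding's
inequality bounds the probability of this by `exp(-n t² / (2L²))`.
-/

open ProbabilityTheory
open scoped ENNReal

theorem ConvexOn.finset_sum {𝕜 E β ι : Type*} [Semiring 𝕜] [PartialOrder 𝕜] [AddCommMonoid E]
    [AddCommMonoid β] [PartialOrder β] [IsOrderedAddMonoid β] [Module 𝕜 E] [Module 𝕜 β]
    {D : Set E} (hD : Convex 𝕜 D) (s : Finset ι) {f : ι → E → β}
    (hf : ∀ i ∈ s, ConvexOn 𝕜 D (f i)) : ConvexOn 𝕜 D (fun x => ∑ i ∈ s, f i x) := by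
  classical
  induction s using Finset.induction_on with
  | empty => simpa using convexOn_const 0 hD
  | insert a s ha ih =>
    simp only [Finset.sum_insert ha]
    exact (hf a (Finset.mem_insert_self a s)).add
      (ih fun i hi => hf i (Finset.mem_insert_of_mem hi))

theorem ConvexOn.monotoneOn_Ici_of_isMinOn {g : ℝ → ℝ} (hg : ConvexOn ℝ univ g) {m : ℝ}
    (hm : IsMinOn g univ m) : MonotoneOn g (Ici m) := by
  intro q (hmq : m ≤ q) b _ hqb
  rcases hqb.eq_or_lt with rfl | hqb
  · exact le_rfl
  rcases hmq.eq_or_lt with rfl | hmq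
  · exact isMinOn_univ_iff.mp hm b
  have hslope := hg.slope_mono_adjacent (mem_univ m) (mem_univ b) hmq hqb
  have hleft : 0 ≤ (g q - g m) / (q - m) :=
    div_nonneg (sub_nonneg.mpr (isMinOn_univ_iff.mp hm q)) (sub_nonneg.mpr hmq.le)
  have hright := hleft.trans hslope
  rwa [le_div_iff₀ (sub_pos.mpr hqb), zero_mul, sub_nonneg] at hright

theorem lipschitzWith_integral {Z : Type*} [MeasurableSpace Z] {ℓ : Z → ℝ → ℝ} {L : ℝ≥0}
    (hlip : ∀ z, LipschitzWith L (ℓ z)) (P : Measure Z) [IsProbabilityMeasure P]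
    (hint : ∀ θ, Integrable (fun z => ℓ z θ) P) :
    LipschitzWith L (fun θ => ∫ z, ℓ z θ ∂P) := by
  refine LipschitzWith.of_dist_le_mul fun a b => ?_
  rw [Real.dist_eq, ← integral_sub (hint a) (hint b)]
  simpa using norm_integral_le_of_norm_le_const (μ := P) (ae_of_all _ fun z =>
    (show ‖ℓ z a - ℓ z b‖ ≤ L * dist a b from (hlip z).dist_le_mul a b))

theorem Dminus_eq_neg_Dplus_comp_neg (f : ℝ → ℝ) (θ : ℝ) :
    Dminus f θ = -Dplus (fun θ => f (-θ)) (-θ) := by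
  rw [Dplus, Dminus, ← Real.sSup_neg]
  congr 1
  ext y
  simp only [mem_image, Set.mem_neg, mem_Ioi]
  refine exists_congr fun s => and_congr_right fun _ => ?_
  rw [show -(-θ + s) = θ - s by ring, neg_neg, ← neg_sub (f θ), neg_div, neg_eq_iff_eq_neg,
    neg_neg, eq_comm]

theorem statErr_le (f : ℝ → ℝ) (θ : ℝ) :
    statErr f θ ≤ max (max (-Dplus f θ) (Dminus f θ)) 0 := by
  have : 0 ≤ sInf {a : ℝ | ∃ θ₀ g : ℝ, a = |g| ∧ ∀ θ' : ℝ, f θ₀ + g * (θ' - θ₀) ≤ f θ'} :=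
    Real.sInf_nonneg fun a ⟨_, g, ha, _⟩ => ha ▸ abs_nonneg g
  unfold statErr
  linarith

theorem Dplus_lt_or_lt_Dminus_of_lt_statErr {f : ℝ → ℝ} {θ t : ℝ} (ht : 0 ≤ t)
    (hθ : t < statErr f θ) : Dplus f θ < -t ∨ t < Dminus f θ := by
  have := hθ.trans_le (statErr_le f θ)
  simp only [lt_max_iff] at this
  rcases this with (h | h) | h
  · exact Or.inl (by linarith)
  · exact Or.inr h
  · linarith

theorem measure_preimage_le_of_isOpen {Ω : Type*} [MeasurableSpace Ω] (μ : Measure Ω)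
    (g : Ω → ℝ) {S : Set ℝ} (hS : IsOpen S) {B : ℝ≥0∞}
    (hB : ∀ q ∈ S, μ {ω | g ω ≤ q} ≤ B) : μ (g ⁻¹' S) ≤ B := by
  -- `g` need not be measurable, so we pass to a countable nested union of sublevel sets.
  set T : Set ℚ := {q | (q : ℝ) ∈ S}
  have hcover : g ⁻¹' S ⊆ ⋃ q ∈ T, {ω | g ω ≤ q} := by
    intro ω (hω : g ω ∈ S)
    obtain ⟨u, hu, hIco⟩ := exists_Ico_subset_of_mem_nhds (hS.mem_nhds hω) ⟨g ω + 1, by linarith⟩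
    obtain ⟨q, hωq, hqu⟩ := exists_rat_btwn hu
    exact mem_biUnion (x := q) (hIco ⟨hωq.le, hqu⟩) hωq.le
  have hdir : DirectedOn (Function.onFun (· ⊆ ·) fun q : ℚ => {ω | g ω ≤ q}) T := by
    intro p hp q hq
    rcases le_total p q with hpq | hqp
    · exact ⟨q, hq, fun ω (h : g ω ≤ p) => h.trans (Rat.cast_le.mpr hpq), le_rfl⟩
    · exact ⟨p, hp, le_rfl, fun ω (h : g ω ≤ q) => h.trans (Rat.cast_le.mpr hqp)⟩
  calc μ (g ⁻¹' S) ≤ μ (⋃ q ∈ T, {ω | g ω ≤ q}) := measure_mono hcover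
    _ = ⨆ q ∈ T, μ {ω | g ω ≤ q} := measure_biUnion_eq_iSup T.to_countable hdir
    _ ≤ B := iSup₂_le fun q hq => hB q hq

theorem measure_pi_sum_nonneg_le {Ω : Type*} [MeasurableSpace Ω] (P : Measure Ω)
    [IsProbabilityMeasure P] {Y : Ω → ℝ} (hY : AEMeasurable Y P) {L : ℝ≥0}
    (hYL : ∀ᵐ ω ∂P, |Y ω| ≤ L) {t : ℝ} (ht : 0 ≤ t) (hmean : P[Y] ≤ -t) (n : ℕ) :
    Measure.pi (fun _ : Fin n => P) {x | 0 ≤ ∑ i, Y (x i)} ≤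
      ENNReal.ofReal (Real.exp (-(n * t ^ 2) / (2 * L ^ 2))) := by
  set μ := Measure.pi fun _ : Fin n => P
  have hsubG (i : Fin n) :
      HasSubgaussianMGF (fun x : Fin n → Ω => Y (x i) - P[Y]) (L ^ 2) μ := by
    have hparam : (‖(L : ℝ) - -L‖₊ / 2) ^ 2 = L ^ 2 := by
      ext
      simp only [sub_neg_eq_add, div_pow, NNReal.coe_div, NNReal.coe_pow, coe_nnnorm,
        Real.norm_eq_abs, sq_abs, NNReal.coe_ofNat]
      ring
    refine HasSubgaussianMGF.of_map (X := fun ω => Y ω - P[Y]) (μ := μ)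
      (Y := fun x : Fin n → Ω => x i) (measurable_pi_apply i).aemeasurable ?_
    rw [(measurePreserving_eval _ i).map_eq, ← hparam]
    exact hasSubgaussianMGF_of_mem_Icc hY (by filter_upwards [hYL] with ω h using abs_le.mp h)
  have hindep : iIndepFun (fun i (x : Fin n → Ω) => Y (x i) - P[Y]) μ :=
    iIndepFun_pi (X := fun _ ω => Y ω - P[Y]) fun _ => hY.sub_const _
  have hevent : {x : Fin n → Ω | 0 ≤ ∑ i, Y (x i)} ⊆
      {x | n * t ≤ ∑ i, (Y (x i) - P[Y])} := by
    intro x (hx : 0 ≤ ∑ i, Y (x i))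
    have hsum : ∑ i, (Y (x i) - P[Y]) = ∑ i, Y (x i) - n * P[Y] := by
      simp [Finset.sum_sub_distrib]
    show n * t ≤ _
    linarith [mul_le_mul_of_nonneg_left hmean (Nat.cast_nonneg n : (0 : ℝ) ≤ n)]
  have hoeffding := HasSubgaussianMGF.measure_sum_ge_le_of_iIndepFun hindep (s := Finset.univ)
    (fun i _ => hsubG i) (by positivity : (0 : ℝ) ≤ n * t)
  have hexponent : -(n * t) ^ 2 / (2 * ∑ _i : Fin n, (L ^ 2 : ℝ≥0)) =
      -(n * t ^ 2) / (2 * L ^ 2) := by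
    rcases n.eq_zero_or_pos with rfl | hn
    · simp
    · simp only [Finset.sum_const, Finset.card_univ, Fintype.card_fin, nsmul_eq_mul,
        NNReal.coe_mul, NNReal.coe_natCast, NNReal.coe_pow]
      field_simp
  rw [hexponent, measureReal_def, ← ENNReal.le_ofReal_iff_toReal_le (measure_ne_top _ _)
    (Real.exp_nonneg _)] at hoeffding
  exact (measure_mono hevent).trans hoeffding

theorem measure_Dplus_lt_le {Z : Type*} [MeasurableSpace Z] {ℓ : Z → ℝ → ℝ} {L : ℝ≥0}
    (hconv : ∀ z, ConvexOn ℝ univ (ℓ z)) (hlip : ∀ z, LipschitzWith L (ℓ z))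
    (P : Measure Z) [IsProbabilityMeasure P] (hint : ∀ θ, Integrable (fun z => ℓ z θ) P)
    {n : ℕ} {θhat : (Fin n → Z) → ℝ}
    (hmin : ∀ x : Fin n → Z, ∀ θ, ∑ i, ℓ (x i) (θhat x) ≤ ∑ i, ℓ (x i) θ) {t : ℝ} (ht : 0 ≤ t) :
    Measure.pi (fun _ : Fin n => P) {x | Dplus (fun θ => ∫ z, ℓ z θ ∂P) (θhat x) < -t} ≤
      ENNReal.ofReal (Real.exp (-(n * t ^ 2) / (2 * L ^ 2))) := by
  set f := fun θ => ∫ z, ℓ z θ ∂P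
  set S := ⋃ h ∈ Ioi (0 : ℝ), {q | (f (q + h) - f q) / h < -t}
  have hS : IsOpen S := by
    have hf := (lipschitzWith_integral hlip P hint).continuous
    exact isOpen_biUnion fun h _ => isOpen_lt (by fun_prop) continuous_const
  have hevent : {x | Dplus f (θhat x) < -t} ⊆ θhat ⁻¹' S := by
    intro x (hx : Dplus f (θhat x) < -t)
    obtain ⟨_, ⟨h, hh, rfl⟩, hlt⟩ := exists_lt_of_csInf_lt ⟨_, mem_image_of_mem _ one_pos⟩ hx
    exact mem_iUnion₂.mpr ⟨h, hh, hlt⟩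
  refine (measure_mono hevent).trans
    (measure_preimage_le_of_isOpen _ θhat hS fun q hq => ?_)
  obtain ⟨h, hh : 0 < h, hslope⟩ := mem_iUnion₂.mp hq
  set Y : Z → ℝ := fun z => (ℓ z (q + h) - ℓ z q) / h
  have hY : Integrable Y P := ((hint _).sub (hint _)).div_const h
  have hYL (z : Z) : |Y z| ≤ L := by
    rw [abs_div, abs_of_pos hh, div_le_iff₀ hh]
    simpa [Real.dist_eq, abs_of_pos hh] using (hlip z).dist_le_mul (q + h) q
  have hmean : P[Y] ≤ -t := by
    rw [integral_div, integral_sub (hint _) (hint _)]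
    exact hslope.le
  have hsub : {x | θhat x ≤ q} ⊆ {x | 0 ≤ ∑ i, Y (x i)} := by
    intro x (hx : θhat x ≤ q)
    have hmono := (ConvexOn.finset_sum convex_univ Finset.univ fun i _ => hconv (x i)
      ).monotoneOn_Ici_of_isMinOn (isMinOn_univ_iff.mpr (hmin x)) hx
      (hx.trans (by linarith) : θhat x ≤ q + h) (by linarith : q ≤ q + h)
    show 0 ≤ ∑ i, (ℓ (x i) (q + h) - ℓ (x i) q) / h
    rw [← Finset.sum_div, Finset.sum_sub_distrib]
    exact div_nonneg (sub_nonneg.mpr hmono) hh.le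
  exact (measure_mono hsub).trans
    (measure_pi_sum_nonneg_le P hY.aemeasurable (ae_of_all _ hYL) ht hmean n)

theorem measure_lt_Dminus_le {Z : Type*} [MeasurableSpace Z] {ℓ : Z → ℝ → ℝ} {L : ℝ≥0}
    (hconv : ∀ z, ConvexOn ℝ univ (ℓ z)) (hlip : ∀ z, LipschitzWith L (ℓ z))
    (P : Measure Z) [IsProbabilityMeasure P] (hint : ∀ θ, Integrable (fun z => ℓ z θ) P)
    {n : ℕ} {θhat : (Fin n → Z) → ℝ}
    (hmin : ∀ x : Fin n → Z, ∀ θ, ∑ i, ℓ (x i) (θhat x) ≤ ∑ i, ℓ (x i) θ) {t : ℝ} (ht : 0 ≤ t) :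
    Measure.pi (fun _ : Fin n => P) {x | t < Dminus (fun θ => ∫ z, ℓ z θ ∂P) (θhat x)} ≤
      ENNReal.ofReal (Real.exp (-(n * t ^ 2) / (2 * L ^ 2))) := by
  have hconv' (z : Z) : ConvexOn ℝ univ (fun θ => ℓ z (-θ)) := by
    have := (hconv z).comp_linearMap (-LinearMap.id)
    rwa [preimage_univ] at this
  have hlip' (z : Z) : LipschitzWith L (fun θ => ℓ z (-θ)) := by
    have := (hlip z).comp LipschitzWith.id.neg
    rwa [mul_one] at this
  have hreflect := measure_Dplus_lt_le hconv' hlip' P (fun θ => hint (-θ))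
    (θhat := fun x => -θhat x) (fun x θ => by simpa using hmin x (-θ)) ht
  simpa only [Dminus_eq_neg_Dplus_comp_neg, lt_neg] using hreflect

/-- Proposition: stationarity of empirical minimizers of Lipschitz convex
losses: any empirical minimizer `θ̂` of `n` i.i.d. samples from `P` satisfies
`P(ℰ_{L_P}(θ̂) > t) ≤ 2 exp(-n t² / (2L²))`. -/
theorem statement5 {Z : Type*} [MeasurableSpace Z] (ℓ : Z → ℝ → ℝ) (L : ℝ≥0)
    (hconv : ∀ z, ConvexOn ℝ Set.univ (ℓ z)) (hlip : ∀ z, LipschitzWith L (ℓ z))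
    (P : Measure Z) (hP : IsProbabilityMeasure P)
    (hint : ∀ θ : ℝ, Integrable (fun z => ℓ z θ) P)
    (n : ℕ) (θhat : (Fin n → Z) → ℝ)
    (hmin : ∀ x : Fin n → Z, ∀ θ : ℝ, (∑ i, ℓ (x i) (θhat x)) ≤ ∑ i, ℓ (x i) θ)
    (t : ℝ) (ht : 0 ≤ t) :
    (Measure.pi fun _ : Fin n => P) {x | t < statErr (fun θ => ∫ z, ℓ z θ ∂P) (θhat x)}
      ≤ ENNReal.ofReal (2 * Real.exp (-((n : ℝ) * t ^ 2) / (2 * (L : ℝ) ^ 2))) := by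
  set f := fun θ => ∫ z, ℓ z θ ∂P
  have hsplit : {x | t < statErr f (θhat x)} ⊆
      {x | Dplus f (θhat x) < -t} ∪ {x | t < Dminus f (θhat x)} :=
    fun x hx => Dplus_lt_or_lt_Dminus_of_lt_statErr ht hx
  calc _ ≤ _ := measure_mono hsplit
    _ ≤ _ := measure_union_le _ _
    _ ≤ _ := add_le_add (measure_Dplus_lt_le hconv hlip P hint hmin ht)
        (measure_lt_Dminus_le hconv hlip P hint hmin ht)
    _ = _ := by rw [← ENNReal.ofReal_add (by positivity) (by positivity), ← two_mul]
end
end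

section
/- Let Q be a finitely supported probability distribution on 𝒵 and assume that θ*(Q) := argmin_{θ∈Θ} L_Q(θ) is compact (and nonempty). Then θ*(Q) is directable. -/
/-!
Write `L = L_Q` and `C = θ*(Q)`, and take `C_ε = cthickening ε C ∩ Θ`, which is compact and
convex; `Q` itself is the only distribution needed. Because `Q` has finite support, `L` is convex,
never `-∞`, and lower semicontinuous (Fatou for the positive part; reverse Fatou for the negative
part, dominated by local lower bounds of the finitely many `ℓ_z`). By compactness `L` exceeds
`min L` by some `η > 0` on the part of `C_ε` at distance `≥ ε` from `C`. For `‖v‖` small, a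
minimiser of `L - ⟨v, ·⟩` over `C_ε` has `L`-value below `min L + η`, so it lies strictly inside
the `ε`-neighbourhood of `C`. There it is a local minimiser of `L - ⟨v, ·⟩` on `Θ`, and convexity
turns this into `v ∈ ∂(L + ι_Θ)`.
-/


open MeasureTheory Set Metric Pointwise ENNReal
open scoped Classical

noncomputable section

/-- The nonnegative part of an extended real, as an element of `ℝ≥0∞`. -/
def erealToENN (x : EReal) : ℝ≥0∞ := if x = ⊤ then ⊤ else ENNReal.ofReal x.toReal

/-- Integral of an extended-real-valued function: positive part minus negative part. -/
def eIntegral {α : Type*} [MeasurableSpace α] (P : Measure α) (g : α → EReal) : EReal :=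
  ((∫⁻ z, erealToENN (g z) ∂P : ℝ≥0∞) : EReal) - ((∫⁻ z, erealToENN (-(g z)) ∂P : ℝ≥0∞) : EReal)

variable {Z : Type*} [MeasurableSpace Z] {E : Type*} [NormedAddCommGroup E] [InnerProductSpace ℝ E]

/-- Convexity of an `EReal`-valued function. -/
def ConvexFnE (f : E → EReal) : Prop :=
  ∀ x y : E, ∀ a b : ℝ, 0 ≤ a → 0 ≤ b → a + b = 1 →
    f (a • x + b • y) ≤ (a : EReal) * f x + (b : EReal) * f y

/-- The convex subdifferential of an `EReal`-valued function. -/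
def subdiffE (f : E → EReal) (θ : E) : Set E :=
  {g | ∀ θ' : E, f θ + ((inner ℝ g (θ' - θ) : ℝ) : EReal) ≤ f θ'}

/-- The convex indicator of a set. -/
def indE (Θ : Set E) : E → EReal := fun θ => if θ ∈ Θ then (0 : EReal) else ⊤

/-- The standing hypotheses on the losses: no `-∞` values, closed (lsc), convex,
finite on the interior of `Θ`, and measurable in `z`. -/
def ProperClosedConvexLoss (ℓ : Z → E → EReal) (Θ : Set E) : Prop :=
  (∀ z θ, ℓ z θ ≠ ⊥) ∧ (∀ z, LowerSemicontinuous (ℓ z)) ∧ (∀ z, ConvexFnE (ℓ z)) ∧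
    (∀ z, ∀ θ ∈ interior Θ, ℓ z θ ≠ ⊤) ∧ (∀ θ : E, Measurable fun z => ℓ z θ)

/-- The population loss `L_P(θ) = E_P[ℓ_Z(θ)]`. -/
def popLoss (ℓ : Z → E → EReal) (P : Measure Z) (θ : E) : EReal := eIntegral P fun z => ℓ z θ

/-- `L_P^*(S) = inf_{θ ∈ S} L_P(θ)`. -/
def popLossInf (ℓ : Z → E → EReal) (P : Measure Z) (S : Set E) : EReal := ⨅ θ ∈ S, popLoss ℓ P θ

/-- Finitely supported probability distributions on `Z`. -/
def Pdisc (Z : Type*) [MeasurableSpace Z] : Set (Measure Z) :=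
  {P | IsProbabilityMeasure P ∧ ∃ s : Finset Z, P ((s : Set Z))ᶜ = 0}

/-- A set `C ⊆ Θ` is directable. -/
def Directable (ℓ : Z → E → EReal) (Θ : Set E) (C : Set E) : Prop :=
  ∀ ε : ℝ, 0 < ε → ∃ Cε : Set E,
    C ⊆ Cε ∧ Cε ⊆ Θ ∧ IsCompact Cε ∧ Convex ℝ Cε ∧ (∀ θ ∈ Cε, Metric.infDist θ C ≤ ε) ∧
      ∃ (k : ℕ) (zs : Fin k → Z) (δ : ℝ), 0 < δ ∧
        Metric.closedBall (0 : E) δ ⊆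
          ⋃ Q ∈ {Q : Measure Z | IsProbabilityMeasure Q ∧ Q (Set.range zs)ᶜ = 0},
            ⋃ θ ∈ Cε, subdiffE (fun θ' => popLoss ℓ Q θ' + indE Θ θ') θ

/-- The halfspace `H_{v,t} = {θ : ⟨v,θ⟩ ≤ t ‖v‖}`. -/
def halfspaceH (v : E) (t : ℝ) : Set E := {θ | (inner ℝ v θ : ℝ) ≤ t * ‖v‖}

/-- A pair `(v, t)` is unconstraining if `H_{v,t}` meets every directable subset of `Θ`. -/
def UnconstrainingPair (ℓ : Z → E → EReal) (Θ : Set E) (v : E) (t : ℝ) : Prop :=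
  ∀ C : Set E, C ⊆ Θ → Directable ℓ Θ C → (halfspaceH v t ∩ C).Nonempty

/-- The achievable set: intersection of all unconstraining halfspaces. -/
def achievableSet (ℓ : Z → E → EReal) (Θ : Set E) : Set E :=
  ⋂ p ∈ {p : E × ℝ | UnconstrainingPair ℓ Θ p.1 p.2}, halfspaceH p.1 p.2

/-- `f` is `K`-Lipschitz on `s` (for `EReal`-valued `f`). -/
def LipschitzOnE (f : E → EReal) (s : Set E) (K : ℝ) : Prop :=
  ∀ x ∈ s, ∀ y ∈ s, f x ≤ f y + ((K * ‖x - y‖ : ℝ) : EReal)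

/-- Condition C.1: uniform Lipschitz continuity on compact subsets of the interior. -/
def CondC1 (ℓ : Z → E → EReal) (Θ : Set E) : Prop :=
  ∀ Θ₀ : Set E, Θ₀ ⊆ interior Θ → IsCompact Θ₀ → ∃ K : ℝ, ∀ z : Z, LipschitzOnE (ℓ z) Θ₀ K

/-- Condition C.2. -/
def CondC2 (ℓ : Z → E → EReal) (Θ : Set E) : Prop :=
  CondC1 ℓ Θ ∧ ∀ ε : ℝ, 0 < ε → ∃ Θ₀ : Set E, Θ₀ ⊆ Θ ∧ IsCompact Θ₀ ∧
    ∀ Q ∈ Pdisc Z, (⨅ θ ∈ Θ₀, (popLoss ℓ Q θ - popLossInf ℓ Q Θ)) ≤ (ε : EReal)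

variable [MeasurableSpace E]

/-- Measurable estimators taking values in `Θ`. -/
def Estimators (Θ : Set E) (Z : Type*) [MeasurableSpace Z] (n : ℕ) : Set ((Fin n → Z) → E) :=
  {f | Measurable f ∧ ∀ x, f x ∈ Θ}

/-- The expected excess risk of the estimator `f` at sample size `n` under `P`. -/
def riskOf (ℓ : Z → E → EReal) (Θ : Set E) {n : ℕ} (f : (Fin n → Z) → E) (P : Measure Z) :
    EReal :=
  eIntegral (Measure.pi fun _ : Fin n => P) fun x => popLoss ℓ P (f x) - popLossInf ℓ P Θ

/-- The discrete minimax risk `𝔐̲_n(ℓ, Z, Θ)`. -/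
def minimaxLow (ℓ : Z → E → EReal) (Θ : Set E) (n : ℕ) : EReal :=
  ⨅ f ∈ Estimators Θ Z n, ⨆ P ∈ Pdisc Z, riskOf ℓ Θ f P

/-- The well-defined Borel probability measures `𝒫_ℓ(Z)`. -/
def Pell (ℓ : Z → E → EReal) (Θ : Set E) : Set (Measure Z) :=
  {P | IsProbabilityMeasure P ∧
    (∀ θ ∈ interior Θ,
      (∫⁻ z, erealToENN (ℓ z θ) ∂P) ≠ ⊤ ∧ (∫⁻ z, erealToENN (-(ℓ z θ)) ∂P) ≠ ⊤) ∧
    (∀ θ ∈ Θ, (∫⁻ z, erealToENN (-(ℓ z θ)) ∂P) ≠ ⊤)}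

/-- The minimax risk `𝔐_n(ℓ, Z, Θ)`. -/
def minimaxRisk (ℓ : Z → E → EReal) (Θ : Set E) (n : ℕ) : EReal :=
  ⨅ f ∈ Estimators Θ Z n, ⨆ P ∈ Pell ℓ Θ, riskOf ℓ Θ f P

open Filter Topology

theorem EReal.toENNReal_add_le_of_le_convex_comb {u v w : EReal} (hu : u ≠ ⊥) (hv : v ≠ ⊥)
    {a b : ℝ} (ha : 0 < a) (hb : 0 < b) (h : w ≤ a * u + b * v) :
    w.toENNReal + .ofReal a * (-u).toENNReal + .ofReal b * (-v).toENNReal ≤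
      .ofReal a * u.toENNReal + .ofReal b * v.toENNReal + (-w).toENNReal := by
  rcases eq_or_ne u ⊤ with rfl | hu'
  · simp [ENNReal.mul_top, ha]
  rcases eq_or_ne v ⊤ with rfl | hv'
  · simp [ENNReal.mul_top, hb]
  lift u to ℝ using ⟨hu', hu⟩
  lift v to ℝ using ⟨hv', hv⟩
  induction w using EReal.rec with
  | bot => simp
  | top => exact absurd h (by simp [← EReal.coe_mul, ← EReal.coe_add])
  | coe w =>
    simp only [← EReal.coe_neg, EReal.real_coe_toENNReal, ← ENNReal.ofReal_mul ha.le,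
      ← ENNReal.ofReal_mul hb.le]
    rw [← ENNReal.toReal_le_toReal (by simp [ENNReal.add_eq_top]) (by simp [ENNReal.add_eq_top])]
    simp only [ENNReal.toReal_add, ENNReal.ofReal_ne_top, ENNReal.add_ne_top, ne_eq,
      not_false_eq_true, and_self, ENNReal.toReal_ofReal']
    have h' : w ≤ a * u + b * v := by exact_mod_cast h
    have := max_zero_sub_max_neg_zero_eq_self w
    have := max_zero_sub_max_neg_zero_eq_self (a * u)
    have := max_zero_sub_max_neg_zero_eq_self (b * v)
    rw [mul_neg, mul_neg]
    linarith

theorem EReal.coe_ennreal_sub_ne_bot (A : ℝ≥0∞) {B : ℝ≥0∞} (hB : B ≠ ∞) :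
    (A : EReal) - B ≠ ⊥ := by
  rw [sub_eq_add_neg, Ne, EReal.add_eq_bot_iff, not_or]
  exact ⟨EReal.coe_ennreal_ne_bot _,
    mt EReal.neg_eq_bot_iff.1 (mt EReal.coe_ennreal_eq_top_iff.1 hB)⟩

theorem EReal.coe_ennreal_sub_le_convex_comb {Ap Bp Ax Bx Ay By : ℝ≥0∞} (hBx : Bx ≠ ∞)
    (hBy : By ≠ ∞) (hBp : Bp ≠ ∞) {a b : ℝ} (ha : 0 < a) (hb : 0 < b)
    (h : Ap + .ofReal a * Bx + .ofReal b * By ≤ .ofReal a * Ax + .ofReal b * Ay + Bp) :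
    (Ap : EReal) - Bp ≤ a * ((Ax : EReal) - Bx) + b * ((Ay : EReal) - By) := by
  have hne {c : ℝ} (hc : 0 < c) (A : ℝ≥0∞) {B : ℝ≥0∞} (hB : B ≠ ∞) :
      (c : EReal) * ((A : EReal) - B) ≠ ⊥ :=
    (EReal.mul_ne_bot _ _).2 ⟨Or.inl (EReal.coe_ne_bot c),
      Or.inr (EReal.coe_ennreal_sub_ne_bot A hB), Or.inl (EReal.coe_ne_top c),
      Or.inl (EReal.coe_nonneg.2 hc.le)⟩
  have htop {c : ℝ} (hc : 0 < c) {B : ℝ≥0∞} (hB : B ≠ ∞) :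
      (c : EReal) * (((∞ : ℝ≥0∞) : EReal) - B) = ⊤ := by
    rw [EReal.coe_ennreal_top, EReal.top_sub (mt EReal.coe_ennreal_eq_top_iff.1 hB),
      EReal.coe_mul_top_of_pos hc]
  rcases eq_or_ne Ax ∞ with rfl | hAx
  · rw [htop ha hBx, EReal.top_add_of_ne_bot (hne hb Ay hBy)]
    exact le_top
  rcases eq_or_ne Ay ∞ with rfl | hAy
  · rw [htop hb hBy, EReal.add_top_of_ne_bot (hne ha Ax hBx)]
    exact le_top
  have hAp : Ap ≠ ∞ := ne_top_of_le_ne_top (by finiteness) (le_self_add.trans (le_self_add.trans h))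
  rw [← EReal.coe_ennreal_toReal hAp, ← EReal.coe_ennreal_toReal hBp,
    ← EReal.coe_ennreal_toReal hAx, ← EReal.coe_ennreal_toReal hBx,
    ← EReal.coe_ennreal_toReal hAy, ← EReal.coe_ennreal_toReal hBy]
  norm_cast
  have := ENNReal.toReal_mono (by finiteness) h
  simp only [ENNReal.toReal_add, ENNReal.toReal_mul, ENNReal.toReal_ofReal ha.le,
    ENNReal.toReal_ofReal hb.le, ne_eq, ENNReal.add_eq_top, ENNReal.mul_eq_top, hAp, hBp, hAx, hBx,
    hAy, hBy, ENNReal.ofReal_ne_top, false_and, and_false, or_self, not_false_eq_true] at this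
  linarith

theorem LowerSemicontinuous.sub_coe {X : Type*} [TopologicalSpace X] {g : X → EReal}
    (hg : LowerSemicontinuous g) {h : X → ℝ} (hh : Continuous h) :
    LowerSemicontinuous fun x => g x - h x := by
  simp_rw [sub_eq_add_neg, ← EReal.coe_neg]
  exact hg.add' (continuous_coe_real_ereal.comp hh.neg).lowerSemicontinuous
    fun x => EReal.continuousAt_add (Or.inr (EReal.coe_ne_bot _)) (Or.inr (EReal.coe_ne_top _))

theorem LowerSemicontinuousOn.exists_pos_forall_add_le {X : Type*} [TopologicalSpace X]
    {g : X → EReal} {K : Set X} (hg : LowerSemicontinuousOn g K) (hK : IsCompact K) {m : ℝ}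
    (hm : ∀ x ∈ K, (m : EReal) < g x) : ∃ η > 0, ∀ x ∈ K, ((m + η : ℝ) : EReal) ≤ g x := by
  rcases K.eq_empty_or_nonempty with rfl | hne
  · exact ⟨1, one_pos, by simp⟩
  obtain ⟨x₀, hx₀, hmin⟩ := hg.exists_isMinOn hne hK
  obtain ⟨r, hmr, hr⟩ := EReal.exists_between_coe_real (hm x₀ hx₀)
  refine ⟨r - m, sub_pos.2 (EReal.coe_lt_coe_iff.1 hmr), fun x hx => ?_⟩
  rw [add_sub_cancel]
  exact hr.le.trans (hmin hx)

section LintegralSemicontinuity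

variable {α X : Type*} [MeasurableSpace α] [TopologicalSpace X] [FirstCountableTopology X]
  {μ : Measure α} {F : X → α → ℝ≥0∞}

theorem lowerSemicontinuous_lintegral (hF_meas : ∀ x, Measurable (F x))
    (hF : ∀ a, LowerSemicontinuous (F · a)) : LowerSemicontinuous fun x => ∫⁻ a, F x a ∂μ := by
  refine lowerSemicontinuous_iff_le_liminf.2 fun x => ?_
  calc ∫⁻ a, F x a ∂μ ≤ ∫⁻ a, liminf (F · a) (𝓝 x) ∂μ :=
        lintegral_mono fun a => (hF a).le_liminf x
    _ ≤ liminf (fun y => ∫⁻ a, F y a ∂μ) (𝓝 x) := lintegral_liminf_le hF_meas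

theorem upperSemicontinuousAt_lintegral {x : X} {g : α → ℝ≥0∞} (hF_meas : ∀ y, Measurable (F y))
    (hF_le : ∀ᶠ y in 𝓝 x, F y ≤ᵐ[μ] g) (hg : ∫⁻ a, g a ∂μ ≠ ∞)
    (hF : ∀ a, UpperSemicontinuousAt (F · a) x) :
    UpperSemicontinuousAt (fun y => ∫⁻ a, F y a ∂μ) x := by
  refine upperSemicontinuousAt_iff_limsup_le.2 ?_
  obtain ⟨u, hlim, hu⟩ := exists_seq_tendsto_limsup (f := 𝓝 x) (u := fun y => ∫⁻ a, F y a ∂μ)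
  obtain ⟨N, hN⟩ := eventually_atTop.1 (hu.eventually hF_le)
  have hv : Tendsto (fun n => u (n + N)) atTop (𝓝 x) := hu.comp (tendsto_add_atTop_nat N)
  calc limsup (fun y => ∫⁻ a, F y a ∂μ) (𝓝 x)
      = limsup (fun n => ∫⁻ a, F (u (n + N)) a ∂μ) atTop :=
        (hlim.comp (tendsto_add_atTop_nat N)).limsup_eq.symm
    _ ≤ ∫⁻ a, limsup (fun n => F (u (n + N)) a) atTop ∂μ :=
        limsup_lintegral_le g (fun n => hF_meas _) (fun n => hN _ (Nat.le_add_left N n)) hg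
    _ ≤ ∫⁻ a, F x a ∂μ := lintegral_mono fun a =>
        hv.limsup_comp_le_limsup.trans (hF a).limsup_le

end LintegralSemicontinuity

section PopLoss

variable {Z E : Type*} [MeasurableSpace Z] {ℓ : Z → E → EReal} {Q : Measure Z} {s : Finset Z}

theorem lintegral_ne_top_of_forall_mem_finset [IsFiniteMeasure Q] (hs : Q (↑s)ᶜ = 0)
    {g : Z → ℝ≥0∞} (hg : ∀ z ∈ s, g z ≠ ∞) : ∫⁻ z, g z ∂Q ≠ ∞ := by
  have hle : ∫⁻ z, g z ∂Q ≤ ∫⁻ _, s.sup g ∂Q :=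
    lintegral_mono_ae <| by filter_upwards [mem_ae_iff.2 hs] with z hz using Finset.le_sup hz
  refine ne_top_of_le_ne_top ?_ hle
  rw [lintegral_const]
  exact ENNReal.mul_ne_top ((Finset.sup_lt_iff bot_lt_top).2
    fun z hz => (hg z hz).lt_top).ne (measure_ne_top Q _)

-- `erealToENN` and Mathlib's `EReal.toENNReal` are the same definition.
theorem popLoss_eq_sub (θ : E) : popLoss ℓ Q θ =
    ((∫⁻ z, (ℓ z θ).toENNReal ∂Q : ℝ≥0∞) : EReal) - (∫⁻ z, (-ℓ z θ).toENNReal ∂Q : ℝ≥0∞) :=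
  rfl

theorem lintegral_toENNReal_neg_ne_top [IsFiniteMeasure Q] (hs : Q (↑s)ᶜ = 0) {θ : E}
    (hbot : ∀ z, ℓ z θ ≠ ⊥) : ∫⁻ z, (-ℓ z θ).toENNReal ∂Q ≠ ∞ :=
  lintegral_ne_top_of_forall_mem_finset hs fun z _ =>
    EReal.toENNReal_ne_top_iff.2 (mt EReal.neg_eq_top_iff.1 (hbot z))

theorem popLoss_ne_bot [IsFiniteMeasure Q] (hs : Q (↑s)ᶜ = 0) {θ : E}
    (hbot : ∀ z, ℓ z θ ≠ ⊥) : popLoss ℓ Q θ ≠ ⊥ :=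
  EReal.coe_ennreal_sub_ne_bot _ (lintegral_toENNReal_neg_ne_top hs hbot)

theorem popLoss_ne_top [IsFiniteMeasure Q] (hs : Q (↑s)ᶜ = 0) {θ : E}
    (htop : ∀ z, ℓ z θ ≠ ⊤) : popLoss ℓ Q θ ≠ ⊤ := by
  rw [popLoss_eq_sub, sub_eq_add_neg]
  refine (EReal.add_lt_top ?_ (mt EReal.neg_eq_top_iff.1 (EReal.coe_ennreal_ne_bot _))).ne
  exact mt EReal.coe_ennreal_eq_top_iff.1
    (lintegral_ne_top_of_forall_mem_finset hs fun z _ => EReal.toENNReal_ne_top_iff.2 (htop z))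

theorem popLoss_lowerSemicontinuous [TopologicalSpace E] [FirstCountableTopology E]
    [IsFiniteMeasure Q] (hs : Q (↑s)ᶜ = 0) (hbot : ∀ z θ, ℓ z θ ≠ ⊥)
    (hlsc : ∀ z, LowerSemicontinuous (ℓ z)) (hmeas : ∀ θ, Measurable (ℓ · θ)) :
    LowerSemicontinuous (popLoss ℓ Q) := by
  intro x
  have hpos : LowerSemicontinuousAt
      (fun θ => ((∫⁻ z, (ℓ z θ).toENNReal ∂Q : ℝ≥0∞) : EReal)) x :=
    continuous_coe_ennreal_ereal.comp_lowerSemicontinuous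
      (lowerSemicontinuous_lintegral (fun θ => (hmeas θ).ereal_toENNReal)
        fun z => EReal.continuous_toENNReal.comp_lowerSemicontinuous (hlsc z)
          fun _ _ => EReal.toENNReal_le_toENNReal)
      (fun _ _ => EReal.coe_ennreal_le_coe_ennreal_iff.2) x
  -- each `ℓ z` with `z ∈ s` is bounded below near `x`, which dominates the negative parts
  choose c hc using fun z => EReal.exists_between_coe_real (bot_lt_iff_ne_bot.2 (hbot z x))
  have hneg : UpperSemicontinuousAt (fun θ => ∫⁻ z, (-ℓ z θ).toENNReal ∂Q) x := by
    refine upperSemicontinuousAt_lintegral (g := fun z => (-(c z : EReal)).toENNReal)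
      (fun θ => (hmeas θ).neg.ereal_toENNReal) ?_
      (lintegral_ne_top_of_forall_mem_finset hs fun z _ => by simp [← EReal.coe_neg])
      fun z => (EReal.continuous_toENNReal.comp_upperSemicontinuous
        (continuous_neg.comp_lowerSemicontinuous_antitone (hlsc z) EReal.neg_strictAnti.antitone)
        fun _ _ => EReal.toENNReal_le_toENNReal) x
    filter_upwards [(s.eventually_all).2 fun z _ => hlsc z x _ (hc z).2] with θ hθ
    filter_upwards [mem_ae_iff.2 hs] with z hz
    exact EReal.toENNReal_le_toENNReal (EReal.neg_le_neg_iff.2 (hθ z hz).le)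
  have hneg' : LowerSemicontinuousAt
      (fun θ => -((∫⁻ z, (-ℓ z θ).toENNReal ∂Q : ℝ≥0∞) : EReal)) x :=
    (continuous_neg.comp continuous_coe_ennreal_ereal).continuousAt
      |>.comp_upperSemicontinuousAt_antitone hneg
        fun _ _ h => EReal.neg_le_neg_iff.2 (EReal.coe_ennreal_le_coe_ennreal_iff.2 h)
  have hB : -((∫⁻ z, (-ℓ z x).toENNReal ∂Q : ℝ≥0∞) : EReal) ≠ ⊥ :=
    mt EReal.neg_eq_bot_iff.1 (mt EReal.coe_ennreal_eq_top_iff.1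
      (lintegral_toENNReal_neg_ne_top hs (hbot · x)))
  rw [show popLoss ℓ Q = _ from funext fun θ => (popLoss_eq_sub θ).trans (sub_eq_add_neg _ _)]
  exact hpos.add' hneg' (EReal.continuousAt_add (Or.inr hB) (Or.inl (EReal.coe_ennreal_ne_bot _)))

theorem popLoss_convexFnE [NormedAddCommGroup E] [InnerProductSpace ℝ E] [IsFiniteMeasure Q]
    (hs : Q (↑s)ᶜ = 0) (hbot : ∀ z θ, ℓ z θ ≠ ⊥) (hconv : ∀ z, ConvexFnE (ℓ z))
    (hmeas : ∀ θ, Measurable (ℓ · θ)) : ConvexFnE (popLoss ℓ Q) := by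
  intro x y a b ha hb hab
  rcases ha.eq_or_lt with rfl | ha
  · obtain rfl : b = 1 := by linarith
    simp
  rcases hb.eq_or_lt with rfl | hb
  · obtain rfl : a = 1 := by linarith
    simp
  have hpos θ : Measurable fun z => (ℓ z θ).toENNReal := (hmeas θ).ereal_toENNReal
  have hneg θ : Measurable fun z => (-ℓ z θ).toENNReal := (hmeas θ).neg.ereal_toENNReal
  set p := a • x + b • y
  simp only [popLoss_eq_sub]
  refine EReal.coe_ennreal_sub_le_convex_comb (lintegral_toENNReal_neg_ne_top hs (hbot · x))
    (lintegral_toENNReal_neg_ne_top hs (hbot · y)) (lintegral_toENNReal_neg_ne_top hs (hbot · p))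
    ha hb ?_
  calc _ = ∫⁻ z, ((ℓ z p).toENNReal + .ofReal a * (-ℓ z x).toENNReal +
          .ofReal b * (-ℓ z y).toENNReal) ∂Q := by
        rw [lintegral_add_right _ ((hneg y).const_mul _),
          lintegral_add_right _ ((hneg x).const_mul _), lintegral_const_mul _ (hneg x),
          lintegral_const_mul _ (hneg y)]
    _ ≤ ∫⁻ z, (.ofReal a * (ℓ z x).toENNReal + .ofReal b * (ℓ z y).toENNReal +
          (-ℓ z p).toENNReal) ∂Q :=
        lintegral_mono fun z => EReal.toENNReal_add_le_of_le_convex_comb (hbot z x) (hbot z y)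
          ha hb (hconv z x y a b ha.le hb.le hab)
    _ = _ := by
        rw [lintegral_add_right _ (hneg p), lintegral_add_right _ ((hpos y).const_mul _),
          lintegral_const_mul _ (hpos x), lintegral_const_mul _ (hpos y)]

end PopLoss

section ConvexAnalysis

variable {E : Type*} [NormedAddCommGroup E] [InnerProductSpace ℝ E] {f : E → EReal} {Θ : Set E}

theorem ConvexFnE.convex_argmin (hf : ConvexFnE f) (hΘ : Convex ℝ Θ) :
    Convex ℝ {θ ∈ Θ | ∀ θ' ∈ Θ, f θ ≤ f θ'} := by
  intro θ₁ h₁ θ₂ h₂ a b ha hb hab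
  refine ⟨hΘ h₁.1 h₂.1 ha hb hab, fun θ' hθ' => ?_⟩
  calc f (a • θ₁ + b • θ₂) ≤ a * f θ₁ + b * f θ₂ := hf θ₁ θ₂ a b ha hb hab
    _ = ((a + b : ℝ) : EReal) * f θ₁ := by
        rw [le_antisymm (h₂.2 θ₁ h₁.1) (h₁.2 θ₂ h₂.1), EReal.coe_add,
          EReal.right_distrib_of_nonneg (EReal.coe_nonneg.2 ha) (EReal.coe_nonneg.2 hb)]
    _ ≤ f θ' := by rw [hab, EReal.coe_one, one_mul]; exact h₁.2 θ' hθ'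

theorem mem_subdiffE_add_indE_of_isLocalMinOn (hf : ConvexFnE f) (hbot : ∀ θ, f θ ≠ ⊥)
    (hΘ : Convex ℝ Θ) {θ₀ v : E} (hθ₀ : θ₀ ∈ Θ) (htop : f θ₀ ≠ ⊤)
    (hmin : IsLocalMinOn (fun θ => f θ - (inner ℝ v θ : ℝ)) Θ θ₀) :
    v ∈ subdiffE (fun θ => f θ + indE Θ θ) θ₀ := by
  intro θ'
  simp only [indE, if_pos hθ₀, add_zero]
  by_cases hθ' : θ' ∈ Θ
  swap
  · rw [if_neg hθ', EReal.add_top_of_ne_bot (hbot θ')]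
    exact le_top
  rw [if_pos hθ', add_zero]
  rcases eq_or_ne (f θ') ⊤ with h' | h'
  · rw [h']
    exact le_top
  obtain ⟨r₀, hr₀⟩ : ∃ r : ℝ, f θ₀ = r := ⟨_, (EReal.coe_toReal htop (hbot θ₀)).symm⟩
  obtain ⟨r', hr'⟩ : ∃ r : ℝ, f θ' = r := ⟨_, (EReal.coe_toReal h' (hbot θ')).symm⟩
  set γ : ℝ → E := fun t => θ₀ + t • (θ' - θ₀)
  have hIoo : ∀ᶠ t in 𝓝[>] (0 : ℝ), t ∈ Ioo 0 1 := Ioo_mem_nhdsGT one_pos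
  have hγ : Tendsto γ (𝓝[>] 0) (𝓝[Θ] θ₀) := by
    refine tendsto_nhdsWithin_iff.2 ⟨?_, ?_⟩
    · have : Tendsto γ (𝓝 0) (𝓝 (γ 0)) := (by fun_prop : Continuous γ).tendsto 0
      simpa [γ] using this.mono_left nhdsWithin_le_nhds
    · filter_upwards [hIoo] with t ht
      exact hΘ.add_smul_sub_mem hθ₀ hθ' (Ioo_subset_Icc_self ht)
  obtain ⟨t, ⟨ht0, ht1⟩, hmin_t⟩ := (hIoo.and (hγ.eventually hmin)).exists
  have hconv_t : f (γ t) ≤ ((1 - t) * r₀ + t * r' : ℝ) := by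
    have := hf θ₀ θ' (1 - t) t (by linarith) ht0.le (by ring)
    rwa [hr₀, hr', show (1 - t) • θ₀ + t • θ' = γ t by simp only [γ]; module] at this
  obtain ⟨c, hc⟩ : ∃ c : ℝ, f (γ t) = c :=
    ⟨_, (EReal.coe_toReal (ne_top_of_le_ne_top (EReal.coe_ne_top _) hconv_t) (hbot _)).symm⟩
  beta_reduce at hmin_t
  rw [hr₀, hc] at hmin_t
  rw [hc] at hconv_t
  rw [hr₀, hr']
  have hinner : (inner ℝ v (γ t) : ℝ) = inner ℝ v θ₀ + t * inner ℝ v (θ' - θ₀) := by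
    simp only [γ, inner_add_right, real_inner_smul_right]
  norm_cast at hconv_t hmin_t ⊢
  have key : t * inner ℝ v (θ' - θ₀) ≤ t * (r' - r₀) := by linarith
  linarith [le_of_mul_le_mul_left key ht0]

theorem le_coe_add_inner_of_isMinOn {K : Set E} {θ₀ θ₁ v : E}
    (hmin : IsMinOn (fun θ => f θ - (inner ℝ v θ : ℝ)) K θ₀) (hθ₁ : θ₁ ∈ K) {m : ℝ}
    (hm : f θ₁ = m) : f θ₀ ≤ ((m + inner ℝ v (θ₀ - θ₁) : ℝ) : EReal) := by
  have h : f θ₀ - (inner ℝ v θ₀ : ℝ) ≤ ((m - inner ℝ v θ₁ : ℝ) : EReal) := by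
    rw [EReal.coe_sub, ← hm]
    exact hmin hθ₁
  rw [EReal.sub_le_iff_le_add (Or.inl (EReal.coe_ne_bot _)) (Or.inl (EReal.coe_ne_top _)),
    ← EReal.coe_add] at h
  rw [inner_sub_right]
  convert h using 2
  ring

theorem exists_closedBall_subset_biUnion_subdiffE [ProperSpace E] (hΘc : IsClosed Θ)
    (hΘ : Convex ℝ Θ) (hf : ConvexFnE f) (hlsc : LowerSemicontinuous f) (hbot : ∀ θ, f θ ≠ ⊥)
    (hC : IsCompact {θ ∈ Θ | ∀ θ' ∈ Θ, f θ ≤ f θ'}) {θs : E}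
    (hθs : θs ∈ {θ ∈ Θ | ∀ θ' ∈ Θ, f θ ≤ f θ'}) (htop : f θs ≠ ⊤) {ε : ℝ} (hε : 0 < ε) :
    ∃ δ > 0, closedBall 0 δ ⊆ ⋃ θ ∈ cthickening ε {θ ∈ Θ | ∀ θ' ∈ Θ, f θ ≤ f θ'} ∩ Θ,
      subdiffE (fun θ' => f θ' + indE Θ θ') θ := by
  set C := {θ ∈ Θ | ∀ θ' ∈ Θ, f θ ≤ f θ'}
  set K := cthickening ε C ∩ Θ
  have hK : IsCompact K := hC.cthickening.inter_right hΘc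
  have hθsK : θs ∈ K := ⟨self_subset_cthickening C hθs, hθs.1⟩
  obtain ⟨m, hm⟩ : ∃ m : ℝ, f θs = m := ⟨_, (EReal.coe_toReal htop (hbot θs)).symm⟩
  obtain ⟨η, hη, hgap⟩ : ∃ η > 0, ∀ θ ∈ {θ ∈ K | ε ≤ infDist θ C}, ((m + η : ℝ) : EReal) ≤ f θ := by
    refine hlsc.lowerSemicontinuousOn _ |>.exists_pos_forall_add_le
      (hK.inter_right (isClosed_le continuous_const (continuous_infDist_pt C))) fun θ hθ => ?_
    have hθC : θ ∉ C := fun h => hε.not_ge (by rw [← infDist_zero_of_mem h]; exact hθ.2)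
    obtain ⟨θ', hθ', hlt⟩ : ∃ θ' ∈ Θ, f θ' < f θ := by
      simpa [C, hθ.1.2] using hθC
    exact hm ▸ (hθs.2 θ' hθ').trans_lt hlt
  obtain ⟨r, hr⟩ := hK.isBounded.subset_closedBall θs
  have hr0 : 0 ≤ r := by simpa using hr hθsK
  refine ⟨η / (r + 1), by positivity, fun v hv => ?_⟩
  obtain ⟨θv, hθvK, hθv⟩ := ((hlsc.sub_coe (continuous_const.inner continuous_id)
    ).lowerSemicontinuousOn K).exists_isMinOn ⟨θs, hθsK⟩ hK
  have hval := le_coe_add_inner_of_isMinOn hθv hθsK hm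
  have hinner : inner ℝ v (θv - θs) < η := by
    have hv' : ‖v‖ ≤ η / (r + 1) := by simpa using hv
    have hd : ‖θv - θs‖ ≤ r := by simpa [dist_eq_norm] using hr hθvK
    calc inner ℝ v (θv - θs) ≤ ‖v‖ * ‖θv - θs‖ := real_inner_le_norm _ _
      _ ≤ η / (r + 1) * r := mul_le_mul hv' hd (norm_nonneg _) (by positivity)
      _ < η := by rw [div_mul_eq_mul_div, div_lt_iff₀ (by positivity)]; linarith
  have hnear : infDist θv C < ε := by
    by_contra! h
    have := (hgap θv ⟨hθvK, h⟩).trans hval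
    norm_cast at this
    linarith
  have hKnhds : K ∈ 𝓝[Θ] θv :=
    mem_of_superset (inter_mem_nhdsWithin Θ (isOpen_thickening.mem_nhds
      ((mem_thickening_iff_infDist_lt ⟨θs, hθs⟩).2 hnear)))
      fun θ hθ => ⟨thickening_subset_cthickening ε C hθ.2, hθ.1⟩
  refine mem_biUnion hθvK (mem_subdiffE_add_indE_of_isLocalMinOn hf hbot hΘ hθvK.2
    (ne_top_of_le_ne_top (EReal.coe_ne_top _) hval) ?_)
  filter_upwards [hKnhds] with θ hθ using hθv hθ

end ConvexAnalysis

/-- Lemma: compact argmin sets are directable: if `Q` is finitely supported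
and `θ*(Q) = argmin_{θ ∈ Θ} L_Q(θ)` is compact and nonempty, then it is directable. -/
theorem statement6 {Z : Type*} [MeasurableSpace Z] {d : ℕ}
    (Θ : Set (EuclideanSpace ℝ (Fin d))) (ℓ : Z → EuclideanSpace ℝ (Fin d) → EReal)
    (hΘclosed : IsClosed Θ) (hΘconv : Convex ℝ Θ) (hΘint : (interior Θ).Nonempty)
    (hloss : ProperClosedConvexLoss ℓ Θ)
    (Q : Measure Z) (hQ : Q ∈ Pdisc Z)
    (hcpt : IsCompact {θ ∈ Θ | ∀ θ' ∈ Θ, popLoss ℓ Q θ ≤ popLoss ℓ Q θ'})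
    (hne : ({θ ∈ Θ | ∀ θ' ∈ Θ, popLoss ℓ Q θ ≤ popLoss ℓ Q θ'} : Set (EuclideanSpace ℝ (Fin d))).Nonempty) :
    Directable ℓ Θ {θ ∈ Θ | ∀ θ' ∈ Θ, popLoss ℓ Q θ ≤ popLoss ℓ Q θ'} := by
  obtain ⟨hQ, s, hs⟩ := hQ
  obtain ⟨hbot, hlsc, hconv, htop, hmeas⟩ := hloss
  obtain ⟨θs, hθs⟩ := hne
  obtain ⟨θi, hθi⟩ := hΘint
  have hL := popLoss_convexFnE hs hbot hconv hmeas
  have hθs_top : popLoss ℓ Q θs ≠ ⊤ :=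
    ne_top_of_le_ne_top (popLoss_ne_top hs (htop · θi hθi)) (hθs.2 θi (interior_subset hθi))
  intro ε hε
  obtain ⟨δ, hδ, hsub⟩ := exists_closedBall_subset_biUnion_subdiffE hΘclosed hΘconv hL
    (popLoss_lowerSemicontinuous hs hbot hlsc hmeas) (fun θ => popLoss_ne_bot hs (hbot · θ))
    hcpt hθs hθs_top hε
  have hQ' : Q ∈ {Q' : Measure Z | IsProbabilityMeasure Q' ∧
      Q' (range ((↑) ∘ s.equivFin.symm))ᶜ = 0} :=
    ⟨hQ, measure_mono_null (compl_subset_compl.2 fun z hz => ⟨s.equivFin ⟨z, hz⟩, by simp⟩) hs⟩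
  exact ⟨cthickening ε _ ∩ Θ, fun θ hθ => ⟨self_subset_cthickening _ hθ, hθ.1⟩,
    inter_subset_right, hcpt.cthickening.inter_right hΘclosed,
    ((hL.convex_argmin hΘconv).cthickening ε).inter hΘconv,
    fun θ hθ => ENNReal.toReal_le_of_le_ofReal hε.le hθ.1, s.card, _, δ, hδ,
    fun v hv => mem_biUnion hQ' (hsub hv)⟩
end
end

section
/- Let P₀ and P₁ be probability measures on a common measurable space with ‖P₀ − P₁‖_TV ≤ γ. Then ‖P₀^n − P₁^n‖_TV ≤ √(1 − (1−γ)^{2n}). In particular, if P_{0,n} and P_{1,n} are sequences of probability measures with ‖P_{0,n} − P_{1,n}‖_TV ≤ a/n for some a < ∞, then limsup_{n→∞} ‖P_{0,n}^n − P_{1,n}^n‖_TV ≤ √(1 − e^{−2a}). -/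
/-! If `μ ≤ P` and `μ ≤ Q`, then `|P A - Q A| ≤ 1 - μ(Ω)` for every event `A`, so the total
variation distance is controlled by the mass of a common lower bound. A Hahn decomposition
shows that the overlap `P ⊓ Q` has mass at least `1 - ‖P - Q‖_TV`, and the product of the
overlaps lies below both `Pⁿ` and `Qⁿ` with mass `(P ⊓ Q)(Ω)ⁿ ≥ (1 - γ)ⁿ`. Hence
`‖Pⁿ - Qⁿ‖_TV ≤ 1 - (1 - γ)ⁿ ≤ √(1 - (1 - γ)^{2n})`, and for `γ = a/n` the right-hand side
tends to `√(1 - e^{-2a})` because `(1 - a/n)^{2n} → e^{-2a}`. -/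

open MeasureTheory

noncomputable section

/-- The total variation distance `‖P - Q‖_TV = sup_A |P(A) - Q(A)|` between two
probability measures. -/
def tvDist {Ω : Type*} [MeasurableSpace Ω] (P Q : Measure Ω) : ℝ :=
  sSup {x : ℝ | ∃ A : Set Ω, MeasurableSet A ∧ x = |(P A).toReal - (Q A).toReal|}

open Filter Topology Set

namespace MeasureTheory.Measure

instance isFiniteMeasure_inf {Ω : Type*} [MeasurableSpace Ω] (μ ν : Measure Ω)
    [IsFiniteMeasure μ] : IsFiniteMeasure (μ ⊓ ν) :=
  isFiniteMeasure_of_le μ inf_le_left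

lemma restrict_le_restrict_of_forall_le {Ω : Type*} [MeasurableSpace Ω] {μ ν : Measure Ω}
    {s : Set Ω} (hs : MeasurableSet s) (h : ∀ t, MeasurableSet t → t ⊆ s → μ t ≤ ν t) :
    μ.restrict s ≤ ν.restrict s :=
  le_iff.2 fun t ht => by
    simpa only [restrict_apply ht] using h _ (ht.inter hs) inter_subset_right

lemma pi_mono {ι : Type*} [Fintype ι] {α : ι → Type*} [∀ i, MeasurableSpace (α i)]
    {μ ν : ∀ i, Measure (α i)} (h : ∀ i, μ i ≤ ν i) : Measure.pi μ ≤ Measure.pi ν := by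
  have outer_le : OuterMeasure.pi (fun i => (μ i).toOuterMeasure)
      ≤ OuterMeasure.pi (fun i => (ν i).toOuterMeasure) :=
    OuterMeasure.le_pi.2 fun t _ => (OuterMeasure.pi_pi_le _ t).trans <|
      Finset.prod_le_prod (fun i _ => zero_le) fun i _ => h i _
  refine le_iff.2 fun s hs => ?_
  simp only [pi_def, toMeasure_apply _ (pi_caratheodory _) hs]
  exact outer_le s

end MeasureTheory.Measure

lemma one_sub_le_sqrt_one_sub_sq {x : ℝ} (h0 : 0 ≤ x) (h1 : x ≤ 1) : 1 - x ≤ √(1 - x ^ 2) :=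
  (Real.le_sqrt (by linarith) (by nlinarith)).2 (by nlinarith)

lemma tendsto_one_sub_div_pow_two_mul (a : ℝ) :
    Tendsto (fun k : ℕ => (1 - a / k) ^ (2 * k)) atTop (𝓝 (Real.exp (-2 * a))) := by
  convert (Real.tendsto_one_add_div_pow_exp (-a)).pow 2 using 1
  · ext k
    rw [mul_comm, pow_mul, neg_div, ← sub_eq_add_neg]
  · rw [← Real.exp_nat_mul]
    ring_nf

section TotalVariation

variable {Ω : Type*} [MeasurableSpace Ω]

lemma tvDist_le_of_forall_le {P Q : Measure Ω} {c : ℝ}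
    (h : ∀ A, MeasurableSet A → |(P A).toReal - (Q A).toReal| ≤ c) : tvDist P Q ≤ c :=
  csSup_le ⟨_, ∅, .empty, rfl⟩ fun _ ⟨A, hA, hx⟩ => hx ▸ h A hA

variable (P Q : Measure Ω) [IsProbabilityMeasure P] [IsProbabilityMeasure Q]

lemma abs_toReal_sub_toReal_le_one (A : Set Ω) : |(P A).toReal - (Q A).toReal| ≤ 1 := by
  have hP : P.real A ≤ 1 := measureReal_le_one
  have hQ : Q.real A ≤ 1 := measureReal_le_one
  simp only [← measureReal_def]
  exact abs_sub_le_iff.2 ⟨by linarith [measureReal_nonneg (μ := Q) (s := A)],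
    by linarith [measureReal_nonneg (μ := P) (s := A)]⟩

lemma tvDist_le_one : tvDist P Q ≤ 1 :=
  tvDist_le_of_forall_le fun A _ => abs_toReal_sub_toReal_le_one P Q A

lemma abs_toReal_sub_le_tvDist {A : Set Ω} (hA : MeasurableSet A) :
    |(P A).toReal - (Q A).toReal| ≤ tvDist P Q :=
  le_csSup ⟨1, fun _ ⟨B, _, hx⟩ => hx ▸ abs_toReal_sub_toReal_le_one P Q B⟩ ⟨A, hA, rfl⟩

lemma tvDist_nonneg : 0 ≤ tvDist P Q :=
  (abs_nonneg _).trans (abs_toReal_sub_le_tvDist P Q .empty)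

lemma tvDist_le_one_sub_of_le {μ : Measure Ω} (hP : μ ≤ P) (hQ : μ ≤ Q) :
    tvDist P Q ≤ 1 - (μ univ).toReal := by
  have : IsFiniteMeasure μ := isFiniteMeasure_of_le P hP
  have real_le {ν : Measure Ω} [IsFiniteMeasure ν] (h : μ ≤ ν) (B : Set Ω) :
      μ.real B ≤ ν.real B :=
    ENNReal.toReal_mono (measure_ne_top ν B) (h B)
  refine tvDist_le_of_forall_le fun A hA => ?_
  have hμA := measureReal_add_measureReal_compl (μ := μ) hA
  have hPA := measureReal_add_measureReal_compl (μ := P) hA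
  have hQA := measureReal_add_measureReal_compl (μ := Q) hA
  rw [probReal_univ] at hPA hQA
  simp only [← measureReal_def]
  exact abs_sub_le_iff.2 ⟨by linarith [real_le hQ A, real_le hP Aᶜ],
    by linarith [real_le hP A, real_le hQ Aᶜ]⟩

lemma one_sub_tvDist_le_inf_univ : 1 - tvDist P Q ≤ ((P ⊓ Q) univ).toReal := by
  obtain ⟨s, hs, hQP, hPQ⟩ := hahn_decomposition P Q
  set μ := Q.restrict s + P.restrict sᶜ
  have hμP : μ ≤ P :=
    calc μ ≤ P.restrict s + P.restrict sᶜ :=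
        add_le_add (Measure.restrict_le_restrict_of_forall_le hs hQP) le_rfl
      _ = P := Measure.restrict_add_restrict_compl hs
  have hμQ : μ ≤ Q :=
    calc μ ≤ Q.restrict s + Q.restrict sᶜ :=
        add_le_add le_rfl (Measure.restrict_le_restrict_of_forall_le hs.compl hPQ)
      _ = Q := Measure.restrict_add_restrict_compl hs
  have hPs : (P s).toReal - (Q s).toReal ≤ tvDist P Q :=
    (le_abs_self _).trans (abs_toReal_sub_le_tvDist P Q hs)
  calc 1 - tvDist P Q ≤ 1 - ((P s).toReal - (Q s).toReal) := by linarith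
    _ = (μ univ).toReal := by
      simp only [μ, Measure.add_apply, Measure.restrict_apply_univ]
      rw [ENNReal.toReal_add (measure_ne_top _ _) (measure_ne_top _ _)]
      simp only [← measureReal_def]
      rw [probReal_compl_eq_one_sub hs]
      ring
    _ ≤ ((P ⊓ Q) univ).toReal := ENNReal.toReal_mono (measure_ne_top _ _) (le_inf hμP hμQ univ)

lemma tvDist_pi_le_one_sub_pow (ι : Type*) [Fintype ι] :
    tvDist (Measure.pi fun _ : ι => P) (Measure.pi fun _ : ι => Q)
      ≤ 1 - (1 - tvDist P Q) ^ Fintype.card ι := by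
  refine (tvDist_le_one_sub_of_le _ _ (Measure.pi_mono fun _ => inf_le_left)
    (Measure.pi_mono fun _ => inf_le_right)).trans ?_
  rw [Measure.pi_univ, Finset.prod_const, Finset.card_univ, ENNReal.toReal_pow]
  gcongr
  · linarith [tvDist_le_one P Q]
  · exact one_sub_tvDist_le_inf_univ P Q

lemma tvDist_pi_le_sqrt {γ : ℝ} (hγ1 : γ ≤ 1) (hγ : tvDist P Q ≤ γ) (n : ℕ) :
    tvDist (Measure.pi fun _ : Fin n => P) (Measure.pi fun _ : Fin n => Q)
      ≤ √(1 - (1 - γ) ^ (2 * n)) :=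
  calc _ ≤ 1 - (1 - tvDist P Q) ^ n := by
        simpa only [Fintype.card_fin] using tvDist_pi_le_one_sub_pow P Q (Fin n)
    _ ≤ 1 - (1 - γ) ^ n := by gcongr
    _ ≤ √(1 - ((1 - γ) ^ n) ^ 2) :=
      one_sub_le_sqrt_one_sub_sq (pow_nonneg (by linarith) n)
        (pow_le_one₀ (by linarith) (by linarith [tvDist_nonneg P Q]))
    _ = √(1 - (1 - γ) ^ (2 * n)) := by rw [← pow_mul, mul_comm]

end TotalVariation

/-- Lemma: total variation of product measures: if `‖P₀ - P₁‖_TV ≤ γ`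
(with `γ ≤ 1`; the total variation distance never exceeds 1) then
`‖P₀^n - P₁^n‖_TV ≤ √(1 - (1-γ)^(2n))`; consequently sequences with `TV ≤ a/n` satisfy
`limsup_n ‖P_{0,n}^n - P_{1,n}^n‖_TV ≤ √(1 - e^{-2a})`. -/
theorem statement8 {Ω : Type*} [MeasurableSpace Ω] :
    (∀ P₀ P₁ : Measure Ω, IsProbabilityMeasure P₀ → IsProbabilityMeasure P₁ →
      ∀ γ : ℝ, γ ≤ 1 → tvDist P₀ P₁ ≤ γ →
        ∀ n : ℕ, tvDist (Measure.pi fun _ : Fin n => P₀) (Measure.pi fun _ : Fin n => P₁)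
          ≤ Real.sqrt (1 - (1 - γ) ^ (2 * n))) ∧
    (∀ P₀ P₁ : ℕ → Measure Ω, (∀ k, IsProbabilityMeasure (P₀ k)) →
      (∀ k, IsProbabilityMeasure (P₁ k)) →
      ∀ a : ℝ, (∀ k : ℕ, 1 ≤ k → tvDist (P₀ k) (P₁ k) ≤ a / k) →
        Filter.limsup
            (fun k : ℕ =>
              tvDist (Measure.pi fun _ : Fin k => P₀ k) (Measure.pi fun _ : Fin k => P₁ k))
            Filter.atTop
          ≤ Real.sqrt (1 - Real.exp (-2 * a))) := by
  refine ⟨fun P₀ P₁ _ _ γ hγ1 hγ n => tvDist_pi_le_sqrt P₀ P₁ hγ1 hγ n, ?_⟩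
  intro P₀ P₁ _ _ a htv
  have hlim := ((tendsto_one_sub_div_pow_two_mul a).const_sub 1).sqrt
  have hle : ∀ᶠ k : ℕ in atTop,
      tvDist (Measure.pi fun _ : Fin k => P₀ k) (Measure.pi fun _ : Fin k => P₁ k)
        ≤ √(1 - (1 - a / k) ^ (2 * k)) := by
    filter_upwards [eventually_ge_atTop 1,
      (tendsto_const_div_atTop_nhds_zero_nat a).eventually (eventually_le_nhds one_pos)]
      with k hk hak
    exact tvDist_pi_le_sqrt _ _ hak (htv k hk) k
  calc limsup _ atTop ≤ limsup (fun k : ℕ => √(1 - (1 - a / k) ^ (2 * k))) atTop :=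
        limsup_le_limsup hle (isCoboundedUnder_le_of_le _ fun k => tvDist_nonneg _ _)
          hlim.isBoundedUnder_le
    _ = _ := hlim.limsup_eq

end
end

section
/- Let f : ℝ^d → ℝ ∪ {+∞} be proper, closed and convex, and assume S₀ := argmin f is compact and nonempty. Then for every ε > 0 there exists δ > 0 such that ⋃_{θ ∈ S₀ + εB₂} ∂f(θ) ⊇ δB₂: every vector of norm at most δ arises as a subgradient of f at some point within distance ε of the set of minimizers. -/
open MeasureTheory Set Metric Pointwise ENNReal
open scoped Classical

noncomputable section

variable {Z : Type*} [MeasurableSpace Z] {E : Type*} [NormedAddCommGroup E] [InnerProductSpace ℝ E]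

variable [MeasurableSpace E]

/-! Let `m = min f`, `S = argmin f` and `K` the closed `ε`-thickening of `S`, which is compact.
On the compact shell of `K` outside the `ε/2`-thickening of `S`, lower semicontinuity keeps `f`
above some `c > m`. If `‖v‖ · diam K < c - m`, the tilted function `f - ⟪v, ·⟫` cannot reach
its minimum over `K` on that shell, so it is minimized at a point `x` of the interior of `K`.
For a convex function a local minimum is global, and `x` minimizing `f - ⟪v, ·⟫` globally
means exactly `v ∈ ∂f(x)`. -/

open Filter Topology
open scoped RealInnerProductSpace

theorem IsCompact.exists_real_gt_forall_le {α : Type*} [TopologicalSpace α] {f : α → EReal}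
    (hf : LowerSemicontinuous f) {A : Set α} (hA : IsCompact A) {m : ℝ}
    (hm : ∀ a ∈ A, (m : EReal) < f a) : ∃ c : ℝ, m < c ∧ ∀ a ∈ A, (c : EReal) ≤ f a := by
  rcases A.eq_empty_or_nonempty with rfl | hne
  · exact ⟨m + 1, lt_add_one m, by simp⟩
  obtain ⟨a₀, ha₀, hmin⟩ := (hf.lowerSemicontinuousOn A).exists_isMinOn hne hA
  obtain ⟨c, hmc, hc⟩ := EReal.lt_iff_exists_real_btwn.1 (hm a₀ ha₀)
  exact ⟨c, EReal.coe_lt_coe_iff.1 hmc, fun a ha => hc.le.trans (hmin ha)⟩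

theorem closedBall_subset_cthickening_of_mem_thickening {α : Type*} [PseudoMetricSpace α]
    {s : Set α} {x : α} {δ ε : ℝ} (hε : 0 ≤ ε) (hx : x ∈ thickening δ s) :
    closedBall x ε ⊆ cthickening (ε + δ) s :=
  (closedBall_subset_cthickening hx ε).trans (cthickening_thickening_subset hε δ s)

section

variable {E : Type*} [NormedAddCommGroup E] [InnerProductSpace ℝ E]

theorem LowerSemicontinuous.sub_inner {f : E → EReal} (hf : LowerSemicontinuous f) (v : E) :
    LowerSemicontinuous fun x => f x - (⟪v, x⟫ : ℝ) :=
  hf.add'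
    (continuous_coe_real_ereal.comp (continuous_const.inner continuous_id).neg).lowerSemicontinuous
    fun _ => EReal.continuousAt_add (.inr (EReal.coe_ne_bot _)) (.inr (EReal.coe_ne_top _))

theorem ConvexFnE.le_add_smul_sub {f : E → EReal} (hf : ConvexFnE f) {x y : E} {a b t : ℝ}
    (hx : f x = a) (hy : f y = b) (ht₀ : 0 ≤ t) (ht₁ : t ≤ 1) :
    f (x + t • (y - x)) ≤ ((a + t * (b - a) : ℝ) : EReal) := by
  have h := hf x y (1 - t) t (sub_nonneg.2 ht₁) ht₀ (sub_add_cancel 1 t)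
  rw [hx, hy] at h
  convert h using 2
  · module
  · norm_cast; ring

theorem ConvexFnE.mem_subdiffE_of_isLocalMin {f : E → EReal} (hf : ConvexFnE f)
    (hbot : ∀ x, f x ≠ ⊥) {x v : E} (hx : f x ≠ ⊤)
    (hmin : IsLocalMin (fun y => f y - (⟪v, y⟫ : ℝ)) x) : v ∈ subdiffE f x := by
  intro y
  by_contra! hlt
  lift f x to ℝ using ⟨hx, hbot x⟩ with a ha
  have hy : f y ≠ ⊤ := (hlt.trans (EReal.coe_lt_top _)).ne
  lift f y to ℝ using ⟨hy, hbot y⟩ with b hb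
  -- Moving from `x` towards `y`, the tilted function decreases at rate `b - a - ⟪v, y - x⟫`.
  have hgap : b - a - ⟪v, y - x⟫ < 0 := by
    have := EReal.coe_lt_coe_iff.1 (hlt.trans_eq (EReal.coe_add a _).symm)
    linarith
  have hpath : Tendsto (fun t : ℝ => x + t • (y - x)) (𝓝[>] 0) (𝓝 x) := by
    have : Continuous fun t : ℝ => x + t • (y - x) := by fun_prop
    simpa using (this.tendsto 0).mono_left nhdsWithin_le_nhds
  obtain ⟨t, ⟨ht₀, ht₁⟩, ht⟩ :=
    (Filter.Eventually.and (Ioc_mem_nhdsGT one_pos) (hpath.eventually hmin)).exists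
  have hconv := hf.le_add_smul_sub ha.symm hb.symm ht₀.le ht₁
  have key : a - ⟪v, x⟫ ≤ a + t * (b - a) - ⟪v, x + t • (y - x)⟫ := by
    rw [← EReal.coe_le_coe_iff, EReal.coe_sub, EReal.coe_sub, ha]
    exact ht.trans (EReal.sub_le_sub hconv le_rfl)
  rw [inner_add_right, real_inner_smul_right] at key
  nlinarith [mul_neg_of_pos_of_neg ht₀ hgap]

theorem le_add_inner_of_isMinOn_sub_inner {f : E → EReal} {v x y : E} {K : Set E}
    (hmin : IsMinOn (fun y => f y - (⟪v, y⟫ : ℝ)) K x) (hy : y ∈ K) :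
    f x ≤ f y + (⟪v, x - y⟫ : ℝ) := by
  have h : f x - (⟪v, x⟫ : ℝ) ≤ f y - (⟪v, y⟫ : ℝ) := hmin hy
  rw [EReal.sub_le_iff_le_add (.inl (EReal.coe_ne_bot _)) (.inl (EReal.coe_ne_top _))] at h
  calc f x ≤ f y - (⟪v, y⟫ : ℝ) + (⟪v, x⟫ : ℝ) := h
    _ = f y + (⟪v, x - y⟫ : ℝ) := by
      rw [inner_sub_right, EReal.coe_sub, sub_eq_add_neg, sub_eq_add_neg, add_assoc,
        add_comm (-_)]

theorem exists_closedBall_subset_biUnion_subdiffE_s11 [ProperSpace E] {f : E → EReal}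
    (hbot : ∀ x, f x ≠ ⊥) (hproper : ∃ x, f x ≠ ⊤) (hlsc : LowerSemicontinuous f)
    (hconv : ConvexFnE f) (hcpt : IsCompact {x | ∀ y, f x ≤ f y})
    (hne : {x | ∀ y, f x ≤ f y}.Nonempty) {ε : ℝ} (hε : 0 < ε) :
    ∃ δ > 0, closedBall (0 : E) δ ⊆
      ⋃ x ∈ cthickening ε {x | ∀ y, f x ≤ f y}, subdiffE f x := by
  set S := {x | ∀ y, f x ≤ f y}
  obtain ⟨x₀, hx₀⟩ := hne
  obtain ⟨x₁, hx₁⟩ := hproper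
  lift f x₀ to ℝ using ⟨ne_top_of_le_ne_top hx₁ (hx₀ x₁), hbot x₀⟩ with m hm
  set K := cthickening ε S
  have hK : IsCompact K := hcpt.cthickening
  have hx₀K : x₀ ∈ K := self_subset_cthickening S hx₀
  obtain ⟨c, hmc, hc⟩ : ∃ c : ℝ, m < c ∧ ∀ x ∈ K \ thickening (ε / 2) S, (c : EReal) ≤ f x := by
    refine (hK.diff isOpen_thickening).exists_real_gt_forall_le hlsc fun x hx => ?_
    obtain ⟨y, hy⟩ : ∃ y, f y < f x := by
      simpa [S] using fun h => hx.2 (self_subset_thickening (half_pos hε) S h)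
    exact hm ▸ (hx₀ y).trans_lt hy
  set D := diam K
  set δ := (c - m) / (D + 1)
  have hδ : 0 < δ := div_pos (sub_pos.2 hmc) (by positivity)
  have hδD : m + δ * D < c := by
    have : δ * D < δ * (D + 1) := by gcongr; linarith
    rw [div_mul_cancel₀ _ (by positivity : D + 1 ≠ 0)] at this
    linarith
  refine ⟨δ, hδ, fun v hv => ?_⟩
  obtain ⟨x, hxK, hmin⟩ :=
    ((hlsc.sub_inner v).lowerSemicontinuousOn K).exists_isMinOn ⟨x₀, hx₀K⟩ hK
  have hfx : f x ≤ ((m + δ * D : ℝ) : EReal) := by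
    refine (le_add_inner_of_isMinOn_sub_inner hmin hx₀K).trans ?_
    rw [← hm, ← EReal.coe_add, EReal.coe_le_coe_iff]
    have hv' : ‖v‖ ≤ δ := mem_closedBall_zero_iff.1 hv
    have hxx₀ : ‖x - x₀‖ ≤ D := by
      rw [← dist_eq_norm]; exact dist_le_diam_of_mem hK.isBounded hxK hx₀K
    nlinarith [real_inner_le_norm v (x - x₀), norm_nonneg v, norm_nonneg (x - x₀)]
  have hxS : x ∈ thickening (ε / 2) S := by
    by_contra h
    have := EReal.coe_le_coe_iff.1 ((hc x ⟨hxK, h⟩).trans hfx)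
    linarith
  have hKx : K ∈ 𝓝 x := mem_of_superset (closedBall_mem_nhds x (half_pos hε)) <| by
    simpa only [add_halves] using closedBall_subset_cthickening_of_mem_thickening (half_pos hε).le hxS
  exact mem_biUnion hxK (hconv.mem_subdiffE_of_isLocalMin hbot
    (ne_top_of_le_ne_top (EReal.coe_ne_top _) hfx) (hmin.isLocalMin hKx))

end

/-- Proposition: strong solution placing: if `argmin f` is compact and
nonempty, then for every `ε > 0` there is `δ > 0` such that every vector of norm at most
`δ` is a subgradient of `f` at some point within distance `ε` of `argmin f`. -/
theorem statement11 {d : ℕ} (f : EuclideanSpace ℝ (Fin d) → EReal)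
    (hbot : ∀ θ, f θ ≠ ⊥) (hproper : ∃ θ, f θ ≠ ⊤)
    (hlsc : LowerSemicontinuous f) (hconv : ConvexFnE f)
    (hcpt : IsCompact {θ : EuclideanSpace ℝ (Fin d) | ∀ θ', f θ ≤ f θ'})
    (hne : ({θ : EuclideanSpace ℝ (Fin d) | ∀ θ', f θ ≤ f θ'}).Nonempty) :
    ∀ ε : ℝ, 0 < ε → ∃ δ : ℝ, 0 < δ ∧
      Metric.closedBall (0 : EuclideanSpace ℝ (Fin d)) δ ⊆
        ⋃ θ ∈ ({θ : EuclideanSpace ℝ (Fin d) | ∀ θ', f θ ≤ f θ'} + Metric.closedBall (0 : EuclideanSpace ℝ (Fin d)) ε),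
          subdiffE f θ := by
  intro ε hε
  rw [hcpt.add_closedBall_zero hε.le]
  exact exists_closedBall_subset_biUnion_subdiffE_s11 hbot hproper hlsc hconv hcpt hne hε

end
end

section
/- Assume d = 1 with Θ = ℝ, and suppose that sup_{z∈𝒵} [ℓ_z(θ) − inf_{θ'∈Θ} ℓ_z(θ')] < ∞ for every θ ∈ int Θ. Then lim_{θ→−∞} sup_{z∈𝒵} D_+ℓ_z(θ) ≤ 0 and lim_{θ→+∞} inf_{z∈𝒵} D_−ℓ_z(θ) ≥ 0 (the limits exist by monotonicity of the one-sided derivatives of convex functions). -/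
open MeasureTheory Set Metric Pointwise ENNReal
open scoped Classical

noncomputable section

variable {Z : Type*} [MeasurableSpace Z] {E : Type*} [NormedAddCommGroup E] [InnerProductSpace ℝ E]

variable [MeasurableSpace E]

/-!
If `ℓ_z(a) - inf ℓ_z ≤ R` for every `z`, then the slope of `ℓ_z` between `a - M` and `a` is at
most `R / M`, and the right derivative at `a - M` is at most that slope. Letting `M → ∞` gives the
first claim; the second is the mirror image, using the slope between `a` and `a + M`.
-/

/-- For convex `f` this is the right derivative `D₊f θ`, since difference quotients of a convex
function decrease as `t ↓ 0`. -/
def rightSlopeInf (f : ℝ → ℝ) (θ : ℝ) : EReal :=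
  ⨅ t ∈ Set.Ioi (0 : ℝ), (((f (θ + t) - f θ) / t : ℝ) : EReal)

/-- For convex `f` this is the left derivative `D₋f θ`. -/
def leftSlopeSup (f : ℝ → ℝ) (θ : ℝ) : EReal :=
  ⨆ t ∈ Set.Ioi (0 : ℝ), (((f θ - f (θ - t)) / t : ℝ) : EReal)

theorem exists_sub_le_of_iSup_gap_ne_top {ι : Type*} {f : ι → ℝ → ℝ} {a : ℝ}
    (hgap : (⨆ i, (((f i a : ℝ) : EReal) - ⨅ x : ℝ, ((f i x : ℝ) : EReal))) ≠ ⊤) :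
    ∃ R : ℝ, ∀ i x, f i a - f i x ≤ R := by
  obtain ⟨R, hR, -⟩ := EReal.lt_iff_exists_real_btwn.mp (lt_top_iff_ne_top.mpr hgap)
  refine ⟨R, fun i x => ?_⟩
  have hgap_i : ((f i a - f i x : ℝ) : EReal) ≤ (f i a : EReal) - ⨅ x : ℝ, (f i x : EReal) := by
    rw [EReal.coe_sub]
    exact EReal.sub_le_sub le_rfl (iInf_le _ x)
  exact_mod_cast (hgap_i.trans
    (le_iSup (fun i => (f i a : EReal) - ⨅ x : ℝ, (f i x : EReal)) i)).trans hR.le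

section SlopeBounds

variable {f : ℝ → ℝ} {a R M : ℝ}

theorem rightSlopeInf_sub_le (hR : ∀ x, f a - f x ≤ R) (hM : 0 < M) :
    rightSlopeInf f (a - M) ≤ ((R / M : ℝ) : EReal) := by
  refine (iInf₂_le M hM).trans (EReal.coe_le_coe_iff.mpr ?_)
  rw [sub_add_cancel]
  exact div_le_div_of_nonneg_right (hR _) hM.le

theorem neg_div_le_leftSlopeSup_add (hR : ∀ x, f a - f x ≤ R) (hM : 0 < M) :
    ((-R / M : ℝ) : EReal) ≤ leftSlopeSup f (a + M) := by
  refine (EReal.coe_le_coe_iff.mpr ?_).trans (le_iSup₂ (f := fun t (_ : t ∈ Set.Ioi (0 : ℝ)) =>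
    (((f (a + M) - f (a + M - t)) / t : ℝ) : EReal)) M hM)
  rw [add_sub_cancel_right]
  exact div_le_div_of_nonneg_right (by linarith [hR (a + M)]) hM.le

end SlopeBounds

theorem tendsto_coe_div_atTop (R : ℝ) :
    Filter.Tendsto (fun M : ℝ => ((R / M : ℝ) : EReal)) Filter.atTop (nhds 0) :=
  (EReal.continuous_coe_iff.mpr continuous_id).tendsto 0 |>.comp
    (tendsto_const_nhds.div_atTop Filter.tendsto_id)

section UniformSlopes

variable {ι : Type*} {f : ι → ℝ → ℝ} {a R : ℝ}

theorem iInf_iSup_rightSlopeInf_nonpos (hR : ∀ i x, f i a - f i x ≤ R) :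
    ⨅ θ, ⨆ i, rightSlopeInf (f i) θ ≤ 0 :=
  ge_of_tendsto (tendsto_coe_div_atTop R) <| (Filter.eventually_gt_atTop 0).mono fun _ hM =>
    (iInf_le _ _).trans (iSup_le fun i => rightSlopeInf_sub_le (hR i) hM)

theorem iSup_iInf_leftSlopeSup_nonneg (hR : ∀ i x, f i a - f i x ≤ R) :
    0 ≤ ⨆ θ, ⨅ i, leftSlopeSup (f i) θ :=
  le_of_tendsto (by simpa only [neg_div] using tendsto_coe_div_atTop (-R)) <|
    (Filter.eventually_gt_atTop 0).mono fun _ hM =>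
      (le_iInf fun i => neg_div_le_leftSlopeSup_add (hR i) hM).trans
        (le_iSup (fun θ => ⨅ i, leftSlopeSup (f i) θ) _)

end UniformSlopes

theorem statement17_general {Z : Type*} (ℓ : Z → ℝ → ℝ)
    (hgap : ∀ θ : ℝ, (⨆ z : Z, (((ℓ z θ : ℝ) : EReal) - ⨅ θ' : ℝ, ((ℓ z θ' : ℝ) : EReal))) ≠ ⊤) :
    ((⨅ θ : ℝ, ⨆ z : Z, ⨅ t ∈ Set.Ioi (0 : ℝ),
        (((ℓ z (θ + t) - ℓ z θ) / t : ℝ) : EReal)) ≤ 0) ∧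
    ((0 : EReal) ≤ ⨆ θ : ℝ, ⨅ z : Z, ⨆ t ∈ Set.Ioi (0 : ℝ),
        (((ℓ z θ - ℓ z (θ - t)) / t : ℝ) : EReal)) := by
  obtain ⟨R, hR⟩ := exists_sub_le_of_iSup_gap_ne_top (hgap 0)
  exact ⟨iInf_iSup_rightSlopeInf_nonpos hR, iSup_iInf_leftSlopeSup_nonneg hR⟩

/-- Lemma: one-sided derivatives eventually have the right signs: if the
loss gaps `sup_z [ℓ_z(θ) - inf ℓ_z]` are finite at every `θ`, then
`lim_{θ → -∞} sup_z D₊ℓ_z(θ) ≤ 0` and `lim_{θ → +∞} inf_z D₋ℓ_z(θ) ≥ 0`; by monotonicity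
of the one-sided derivatives these limits are the infimum resp. supremum over `θ`. -/
theorem statement17 {Z : Type*} [MeasurableSpace Z] (ℓ : Z → ℝ → ℝ)
    (hconv : ∀ z, ConvexOn ℝ Set.univ (ℓ z))
    (hgap : ∀ θ : ℝ, (⨆ z : Z, (((ℓ z θ : ℝ) : EReal) - ⨅ θ' : ℝ, ((ℓ z θ' : ℝ) : EReal))) ≠ ⊤) :
    ((⨅ θ : ℝ, ⨆ z : Z, ⨅ t ∈ Set.Ioi (0 : ℝ),
        (((ℓ z (θ + t) - ℓ z θ) / t : ℝ) : EReal)) ≤ 0) ∧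
    ((0 : EReal) ≤ ⨆ θ : ℝ, ⨅ z : Z, ⨆ t ∈ Set.Ioi (0 : ℝ),
        (((ℓ z θ - ℓ z (θ - t)) / t : ℝ) : EReal)) :=
  statement17_general ℓ hgap
end
end

section
/- Let L : ℝ^d → ℝ ∪ {+∞} be closed convex, Θ ⊆ ℝ^d closed convex, t < ∞ and ε > 0. For S ⊆ ℝ^d write L*(S) := inf_{θ∈S} L(θ), and for v ∈ ℝ^d let H_{v,t} := {θ : ⟨v,θ⟩ ≤ t‖v‖₂}. If L*(H_{v,t} ∩ Θ) < L*(Θ) + ε for every v ∈ ℝ^d, then L*(tB₂ ∩ Θ) ≤ L*(Θ) + ε, where tB₂ is the closed Euclidean ball of radius t. -/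
open MeasureTheory Set Metric Pointwise ENNReal
open scoped Classical

noncomputable section

variable {Z : Type*} [MeasurableSpace Z] {E : Type*} [NormedAddCommGroup E] [InnerProductSpace ℝ E]

variable [MeasurableSpace E]

/-
If the conclusion failed, the sublevel set `C = Θ ∩ {L ≤ L*(Θ) + ε}`, which is closed, convex and
nonempty, would miss the ball `tB₂`. The nearest point `p` of `C` to the origin then has
`‖p‖ > t`, and the projection inequality `⟨p, θ⟩ ≥ ‖p‖²` on `C` shows that the halfspace `H_{p,t}`
misses `C`, contradicting the hypothesis at `v = p`.
-/

section

variable {F : Type*} [NormedAddCommGroup F] [InnerProductSpace ℝ F]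

theorem ConvexFnE.convex_setOf_le {f : F → EReal} (hf : ConvexFnE f) (c : EReal) :
    Convex ℝ {x | f x ≤ c} := by
  intro x hx y hy a b ha hb hab
  have ha' : (0 : EReal) ≤ a := EReal.coe_nonneg.mpr ha
  have hb' : (0 : EReal) ≤ b := EReal.coe_nonneg.mpr hb
  calc f (a • x + b • y) ≤ (a : EReal) * f x + (b : EReal) * f y := hf x y a b ha hb hab
    _ ≤ (a : EReal) * c + (b : EReal) * c :=
      add_le_add (mul_le_mul_of_nonneg_left hx ha') (mul_le_mul_of_nonneg_left hy hb')
    _ = c := by rw [← EReal.right_distrib_of_nonneg ha' hb', ← EReal.coe_add, hab, EReal.coe_one,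
      one_mul]

theorem exists_halfspaceH_disjoint_of_disjoint_closedBall [CompleteSpace F] {C : Set F}
    (hne : C.Nonempty) (hclosed : IsClosed C) (hconv : Convex ℝ C) {t : ℝ} (ht : 0 ≤ t)
    (hdisj : Disjoint (closedBall 0 t) C) : ∃ w : F, Disjoint (halfspaceH w t) C := by
  obtain ⟨p, hpC, hp⟩ := exists_norm_eq_iInf_of_complete_convex hne hclosed.isComplete hconv 0
  have hproj := (norm_eq_iInf_iff_real_inner_le_zero hconv hpC).mp hp
  have hpt : t < ‖p‖ := lt_of_not_ge fun hle =>
    hdisj.ne_of_mem (mem_closedBall_zero_iff.mpr hle) hpC rfl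
  refine ⟨p, disjoint_left.mpr fun θ (hθH : inner ℝ p θ ≤ t * ‖p‖) hθC => ?_⟩
  have hθ : ‖p‖ ^ 2 ≤ inner ℝ p θ := by
    have := hproj θ hθC
    rw [zero_sub, inner_neg_left, inner_sub_right, real_inner_self_eq_norm_sq] at this
    linarith
  have hgap : t * ‖p‖ < ‖p‖ ^ 2 := by
    rw [sq]
    exact mul_lt_mul_of_pos_right hpt (ht.trans_lt hpt)
  linarith

end

theorem statement18_general {d : ℕ} (L : EuclideanSpace ℝ (Fin d) → EReal)
    (hlsc : LowerSemicontinuous L) (hconv : ConvexFnE L)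
    (Θ : Set (EuclideanSpace ℝ (Fin d))) (hΘclosed : IsClosed Θ) (hΘconv : Convex ℝ Θ)
    (t : ℝ) (ht : 0 ≤ t) (ε : ℝ)
    (h : ∀ v : EuclideanSpace ℝ (Fin d), (⨅ θ ∈ halfspaceH v t ∩ Θ, L θ) < (⨅ θ ∈ Θ, L θ) + (ε : EReal)) :
    (⨅ θ ∈ Metric.closedBall (0 : EuclideanSpace ℝ (Fin d)) t ∩ Θ, L θ) ≤ (⨅ θ ∈ Θ, L θ) + (ε : EReal) := by
  set c := (⨅ θ ∈ Θ, L θ) + (ε : EReal)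
  set C := Θ ∩ {θ | L θ ≤ c}
  have near_min (v) : ∃ θ ∈ halfspaceH v t ∩ Θ, L θ < c := by simpa [iInf_lt_iff] using h v
  by_contra! hball
  have hdisj : Disjoint (closedBall 0 t) C := disjoint_left.mpr fun θ hθ hθC =>
    (hball.trans_le (iInf₂_le θ ⟨hθ, hθC.1⟩)).not_ge hθC.2
  obtain ⟨θ₀, ⟨-, hθ₀Θ⟩, hθ₀⟩ := near_min 0
  obtain ⟨w, hw⟩ := exists_halfspaceH_disjoint_of_disjoint_closedBall (C := C)
    ⟨θ₀, hθ₀Θ, hθ₀.le⟩ (hΘclosed.inter (hlsc.isClosed_preimage c))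
    (hΘconv.inter (hconv.convex_setOf_le c)) ht hdisj
  obtain ⟨θ, ⟨hθH, hθΘ⟩, hθ⟩ := near_min w
  exact hw.ne_of_mem hθH ⟨hθΘ, hθ.le⟩ rfl

/-- Lemma: from halfspace near-minimizers to ball near-minimizers: if every
halfspace `H_(v,t) ∩ Θ` contains an `ε`-near-minimizer of the closed convex `L`, then so
does `tB₂ ∩ Θ`. -/
theorem statement18 {d : ℕ} (L : EuclideanSpace ℝ (Fin d) → EReal)
    (hbot : ∀ θ, L θ ≠ ⊥) (hlsc : LowerSemicontinuous L) (hconv : ConvexFnE L)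
    (Θ : Set (EuclideanSpace ℝ (Fin d))) (hΘclosed : IsClosed Θ) (hΘconv : Convex ℝ Θ)
    (t : ℝ) (ht : 0 ≤ t) (ε : ℝ) (hε : 0 < ε)
    (h : ∀ v : EuclideanSpace ℝ (Fin d), (⨅ θ ∈ halfspaceH v t ∩ Θ, L θ) < (⨅ θ ∈ Θ, L θ) + (ε : EReal)) :
    (⨅ θ ∈ Metric.closedBall (0 : EuclideanSpace ℝ (Fin d)) t ∩ Θ, L θ) ≤ (⨅ θ ∈ Θ, L θ) + (ε : EReal) :=
  statement18_general L hlsc hconv Θ hΘclosed hΘconv t ht ε h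

end
end
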